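/- arXiv:2408.07803 — 3 statements merged into one kernel-verified Lean document; each statement's English description precedes it below -/
import Mathlib

section
/- Let d ≥ 1 and let Ψ = (ψ_0, …, ψ_d) ∈ ℝ^{d+1} be phase factors. Then there exist complex polynomials P, Q such that: (1) deg P ≤ d and deg Q ≤ d−1; (2) every monomial of P has exponent congruent to d mod 2 and every monomial of Q has exponent congruent to (d−1) mod 2; (3) |P(x)|² + (1−x²)|Q(x)|² = 1 for all x ∈ [−1,1]; and (4) for all x ∈ [−1,1], U(x,Ψ) = [[P(x), i√(1−x²)·Q(x)], [i√(1−x²)·Q*(x), P*(x)]], where P*, Q* denote the polynomials obtained by complex-conjugating all coefficients of P, Q. -/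
open Matrix Polynomial Complex

/-- The Pauli X matrix. -/
noncomputable def PX : Matrix (Fin 2) (Fin 2) ℂ := !![0, 1; 1, 0]

/-- The Pauli Z matrix. -/
noncomputable def PZ : Matrix (Fin 2) (Fin 2) ℂ := !![1, 0; 0, -1]

/-- The QSP unitary `U(x, Ψ) = e^{iψ₀Z} ∏_{j=1}^d e^{i arccos(x) X} e^{iψⱼ Z}`,
the product taken with `j` increasing from left to right. -/
noncomputable def qspU (d : ℕ) (Ψ : Fin (d + 1) → ℝ) (x : ℝ) : Matrix (Fin 2) (Fin 2) ℂ :=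
  NormedSpace.exp ((Complex.I * (Ψ 0 : ℂ)) • PZ) *
    ((List.finRange d).map (fun j =>
      NormedSpace.exp ((Complex.I * (Real.arccos x : ℂ)) • PX) *
      NormedSpace.exp ((Complex.I * ((Ψ j.succ : ℝ) : ℂ)) • PZ))).prod

/-- The matrix `[[P(x), i√(1-x²) Q(x)], [i√(1-x²) Q*(x), P*(x)]]`, where `P*`, `Q*` have
complex-conjugated coefficients. -/
noncomputable def qspMat (P Q : Polynomial ℂ) (x : ℝ) : Matrix (Fin 2) (Fin 2) ℂ :=
  !![P.eval (x : ℂ), Complex.I * (Real.sqrt (1 - x ^ 2) : ℂ) * Q.eval (x : ℂ);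
     Complex.I * (Real.sqrt (1 - x ^ 2) : ℂ) * (Q.map (starRingEnd ℂ)).eval (x : ℂ),
     (P.map (starRingEnd ℂ)).eval (x : ℂ)]


/-! The unitary is built one layer at a time, `U(x, Ψ) = e^{iψ₀Z} W(x) U(x, tail Ψ)`, where the
signal operator is `W(x) = e^{i arccos(x) X} = [[x, i√(1-x²)], [i√(1-x²), x]]`. Multiplying the
form `[[P, i√(1-x²) Q], [i√(1-x²) Q*, P*]]` by `W(x)` and then by `e^{iψ₀Z} = diag(e, e*)`,
`e = e^{iψ₀}`, gives the same form for `P' = e (xP + (x²-1) Q*)` and `Q' = e (xQ + P*)`, since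
`(i√(1-x²))² = x² - 1`; this raises both degrees by one and flips both parities. The
normalization is the determinant of the form, and every factor of `U` has determinant one. -/

namespace Polynomial

variable {R S : Type*}

def ParityDegLE [Semiring R] (d : ℕ) (P : R[X]) : Prop :=
  ∀ n, P.coeff n ≠ 0 → n ≤ d ∧ n % 2 = d % 2

namespace ParityDegLE

section Semiring

variable [Semiring R] {d : ℕ} {P Q : R[X]}

theorem zero : ParityDegLE d (0 : R[X]) := fun n h => absurd (coeff_zero n) h

theorem C (a : R) : ParityDegLE 0 (C a) := by
  intro n h
  rw [coeff_C] at h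
  split_ifs at h with hn
  · simp [hn]
  · exact absurd rfl h

theorem add (hP : ParityDegLE d P) (hQ : ParityDegLE d Q) : ParityDegLE d (P + Q) := by
  intro n h
  rw [coeff_add] at h
  by_cases hPn : P.coeff n = 0
  · exact hQ n (by simpa [hPn] using h)
  · exact hP n hPn

theorem C_mul (a : R) (hP : ParityDegLE d P) : ParityDegLE d (Polynomial.C a * P) :=
  fun n h => hP n (right_ne_zero_of_mul (by rwa [coeff_C_mul] at h))

theorem X_mul (hP : ParityDegLE d P) : ParityDegLE (d + 1) (X * P) := by
  rintro (_ | n) h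
  · exact absurd (coeff_X_mul_zero P) h
  · rw [coeff_X_mul] at h
    have := hP n h
    omega

theorem of_X_mul (h : ParityDegLE d (X * P)) : ParityDegLE (d - 1) P := by
  intro n hn
  have := h (n + 1) (by rwa [coeff_X_mul])
  omega

theorem succ_of_X_mul (h : ParityDegLE d (X * P)) : ParityDegLE (d + 1) P := by
  intro n hn
  have := h (n + 1) (by rwa [coeff_X_mul])
  omega

theorem map [Semiring S] (f : R →+* S) (hP : ParityDegLE d P) : ParityDegLE d (P.map f) :=
  fun n h => hP n fun h0 => h (by rw [coeff_map, h0, map_zero])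

theorem natDegree_le (hP : ParityDegLE d P) : P.natDegree ≤ d :=
  natDegree_le_iff_coeff_eq_zero.2 fun n hn => by_contra fun h => by
    have := hP n h
    omega

end Semiring

theorem sub [Ring R] {d : ℕ} {P Q : R[X]} (hP : ParityDegLE d P) (hQ : ParityDegLE d Q) :
    ParityDegLE d (P - Q) := by
  intro n h
  rw [coeff_sub] at h
  by_cases hPn : P.coeff n = 0
  · exact hQ n (by simpa [hPn] using h)
  · exact hP n hPn

end ParityDegLE

end Polynomial

open ComplexConjugate

noncomputable def phaseMat (e : ℂ) : Matrix (Fin 2) (Fin 2) ℂ := !![e, 0; 0, conj e]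

noncomputable def signalMat (x : ℝ) : Matrix (Fin 2) (Fin 2) ℂ :=
  !![(x : ℂ), I * (√(1 - x ^ 2) : ℝ); I * (√(1 - x ^ 2) : ℝ), (x : ℂ)]

theorem exp_smul_PZ (c : ℂ) :
    NormedSpace.exp (c • PZ) = !![Complex.exp c, 0; 0, Complex.exp (-c)] := by
  have h : c • PZ = diagonal ![c, -c] := by
    ext i j; fin_cases i <;> fin_cases j <;> simp [PZ]
  rw [h, exp_diagonal]
  ext i j; fin_cases i <;> fin_cases j <;> simp [← Complex.exp_eq_exp_ℂ]

theorem exp_I_mul_smul_PZ (ψ : ℝ) :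
    NormedSpace.exp ((I * ψ) • PZ) = phaseMat (Complex.exp (I * ψ)) := by
  rw [exp_smul_PZ, phaseMat, ← Complex.exp_conj, map_mul, conj_I, conj_ofReal, neg_mul]

theorem smul_PX_eq_conj (c : ℂ) :
    c • PX = !![1, 1; 1, -1] * (c • PZ) * (2⁻¹ : ℂ) • !![1, 1; 1, -1] := by
  ext i j; fin_cases i <;> fin_cases j <;> simp [PX, PZ] <;> ring

theorem exp_smul_PX (c : ℂ) :
    NormedSpace.exp (c • PX) =
      !![(Complex.exp c + Complex.exp (-c)) / 2, (Complex.exp c - Complex.exp (-c)) / 2;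
         (Complex.exp c - Complex.exp (-c)) / 2, (Complex.exp c + Complex.exp (-c)) / 2] := by
  set H : Matrix (Fin 2) (Fin 2) ℂ := !![1, 1; 1, -1]
  have hH : H * (2⁻¹ : ℂ) • H = 1 := by
    ext i j; fin_cases i <;> fin_cases j <;> simp [H, one_apply] <;> norm_num
  rw [smul_PX_eq_conj, ← inv_eq_right_inv hH,
    exp_conj H _ ((isUnit_iff_isUnit_det H).2 (isUnit_det_of_right_inverse hH)),
    inv_eq_right_inv hH, exp_smul_PZ]
  ext i j; fin_cases i <;> fin_cases j <;> simp [H] <;> ring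

theorem exp_I_mul_arccos_smul_PX {x : ℝ} (hx : x ∈ Set.Icc (-1 : ℝ) 1) :
    NormedSpace.exp ((I * Real.arccos x) • PX) = signalMat x := by
  have hexp (θ : ℝ) : Complex.exp (I * θ) = Real.cos θ + I * Real.sin θ := by
    rw [mul_comm, Complex.exp_mul_I, ← ofReal_cos, ← ofReal_sin, mul_comm]
  have hneg : -(I * Real.arccos x) = I * (-Real.arccos x : ℝ) := by push_cast; ring
  rw [exp_smul_PX, hneg, hexp, hexp, Real.cos_neg, Real.sin_neg, Real.cos_arccos hx.1 hx.2,
    Real.sin_arccos, signalMat]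
  ext i j; fin_cases i <;> fin_cases j <;> simp <;> ring

theorem qspU_zero (Ψ : Fin 1 → ℝ) (x : ℝ) : qspU 0 Ψ x = phaseMat (Complex.exp (I * Ψ 0)) := by
  simp [qspU, exp_I_mul_smul_PZ]

theorem qspU_succ {d : ℕ} (Ψ : Fin (d + 2) → ℝ) {x : ℝ} (hx : x ∈ Set.Icc (-1 : ℝ) 1) :
    qspU (d + 1) Ψ x =
      phaseMat (Complex.exp (I * Ψ 0)) * signalMat x * qspU d (Fin.tail Ψ) x := by
  rw [← exp_I_mul_smul_PZ, ← exp_I_mul_arccos_smul_PX hx, qspU, qspU, List.finRange_succ,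
    List.map_cons, List.prod_cons, List.map_map]
  simp only [Function.comp_def, Fin.tail, mul_assoc]

theorem eval_map_conj (P : ℂ[X]) (x : ℝ) :
    (P.map (starRingEnd ℂ)).eval (x : ℂ) = conj (P.eval (x : ℂ)) := by
  conv_lhs => rw [← conj_ofReal x]
  rw [eval_map, eval₂_at_apply]

theorem ofReal_sqrt_one_sub_sq_sq {x : ℝ} (hx : x ∈ Set.Icc (-1 : ℝ) 1) :
    ((√(1 - x ^ 2) : ℝ) : ℂ) ^ 2 = 1 - (x : ℂ) ^ 2 := by
  rw [← ofReal_pow, Real.sq_sqrt (by nlinarith [hx.1, hx.2])]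
  push_cast; ring

theorem qspMat_eq (P Q : ℂ[X]) (x : ℝ) :
    qspMat P Q x = !![P.eval (x : ℂ), I * (√(1 - x ^ 2) : ℝ) * Q.eval (x : ℂ);
      I * (√(1 - x ^ 2) : ℝ) * conj (Q.eval (x : ℂ)), conj (P.eval (x : ℂ))] := by
  rw [qspMat, eval_map_conj, eval_map_conj]

noncomputable def qspStep (e : ℂ) (PQ : ℂ[X] × ℂ[X]) : ℂ[X] × ℂ[X] :=
  (C e * (X * PQ.1 + (X ^ 2 - 1) * PQ.2.map (starRingEnd ℂ)),
    C e * (X * PQ.2 + PQ.1.map (starRingEnd ℂ)))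

noncomputable def qspPolys : (d : ℕ) → (Fin (d + 1) → ℝ) → ℂ[X] × ℂ[X]
  | 0, Ψ => (C (Complex.exp (I * Ψ 0)), 0)
  | d + 1, Ψ => qspStep (Complex.exp (I * Ψ 0)) (qspPolys d (Fin.tail Ψ))

theorem qspMat_qspStep (e : ℂ) (PQ : ℂ[X] × ℂ[X]) {x : ℝ} (hx : x ∈ Set.Icc (-1 : ℝ) 1) :
    qspMat (qspStep e PQ).1 (qspStep e PQ).2 x =
      phaseMat e * signalMat x * qspMat PQ.1 PQ.2 x := by
  have hs := ofReal_sqrt_one_sub_sq_sq hx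
  simp only [qspMat_eq, qspStep, phaseMat, signalMat, eval_mul, eval_add, eval_sub, eval_pow,
    eval_X, eval_C, eval_one, eval_map_conj, map_mul, map_add, map_sub, map_pow, map_one,
    conj_ofReal]
  ext i j; fin_cases i <;> fin_cases j <;> simp <;> ring_nf <;> simp only [I_sq, hs] <;> ring

theorem qspU_eq_qspMat (d : ℕ) (Ψ : Fin (d + 1) → ℝ) {x : ℝ} (hx : x ∈ Set.Icc (-1 : ℝ) 1) :
    qspU d Ψ x = qspMat (qspPolys d Ψ).1 (qspPolys d Ψ).2 x := by
  induction d with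
  | zero => simp [qspU_zero, qspMat_eq, qspPolys, phaseMat]
  | succ d ih => rw [qspU_succ Ψ hx, ih, qspPolys, qspMat_qspStep _ _ hx]

/-- The condition on `X * Q` says `deg Q ≤ d - 1` with parity `d - 1`, and `Q = 0` when `d = 0`. -/
theorem parityDegLE_qspPolys (d : ℕ) (Ψ : Fin (d + 1) → ℝ) :
    (qspPolys d Ψ).1.ParityDegLE d ∧ (X * (qspPolys d Ψ).2).ParityDegLE d := by
  induction d with
  | zero => exact ⟨ParityDegLE.C _, by simpa [qspPolys] using ParityDegLE.zero⟩
  | succ d ih =>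
    obtain ⟨hP, hQ⟩ := ih (Fin.tail Ψ)
    set P := (qspPolys d (Fin.tail Ψ)).1
    set Q := (qspPolys d (Fin.tail Ψ)).2
    have hP' : X * P + (X ^ 2 - 1) * Q.map (starRingEnd ℂ) =
        X * (P + X * Q.map (starRingEnd ℂ)) - Q.map (starRingEnd ℂ) := by ring
    refine ⟨?_, ?_⟩
    · rw [qspPolys, qspStep, hP']
      exact (((hP.add (by simpa using hQ.map (starRingEnd ℂ))).X_mul).sub
        (hQ.succ_of_X_mul.map _)).C_mul _
    · rw [qspPolys, qspStep, mul_left_comm]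
      exact ((hQ.add (hP.map _)).X_mul).C_mul _

theorem det_phaseMat (e : ℂ) : (phaseMat e).det = (‖e‖ ^ 2 : ℝ) := by
  simp [phaseMat, det_fin_two, mul_conj, normSq_eq_norm_sq]

theorem det_signalMat {x : ℝ} (hx : x ∈ Set.Icc (-1 : ℝ) 1) : (signalMat x).det = 1 := by
  simp only [signalMat, det_fin_two_of]
  linear_combination (-I ^ 2) * ofReal_sqrt_one_sub_sq_sq hx + ((x : ℂ) ^ 2 - 1) * I_sq

theorem det_qspU (d : ℕ) (Ψ : Fin (d + 1) → ℝ) {x : ℝ} (hx : x ∈ Set.Icc (-1 : ℝ) 1) :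
    (qspU d Ψ x).det = 1 := by
  induction d with
  | zero => simp [qspU_zero, det_phaseMat, Complex.norm_exp_I_mul_ofReal]
  | succ d ih =>
    rw [qspU_succ Ψ hx, det_mul, det_mul, det_phaseMat, det_signalMat hx, ih,
      Complex.norm_exp_I_mul_ofReal]
    simp

theorem det_qspMat (P Q : ℂ[X]) {x : ℝ} (hx : x ∈ Set.Icc (-1 : ℝ) 1) :
    (qspMat P Q x).det = (‖P.eval (x : ℂ)‖ ^ 2 + (1 - x ^ 2) * ‖Q.eval (x : ℂ)‖ ^ 2 : ℝ) := by
  rw [qspMat_eq, det_fin_two_of]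
  push_cast
  rw [← mul_conj', ← mul_conj']
  linear_combination Q.eval (x : ℂ) * conj (Q.eval (x : ℂ)) *
    (-I ^ 2 * ofReal_sqrt_one_sub_sq_sq hx + ((x : ℂ) ^ 2 - 1) * I_sq)

theorem qsp_exists_polynomials_general (d : ℕ) (Ψ : Fin (d + 1) → ℝ) :
    ∃ P Q : Polynomial ℂ,
      P.natDegree ≤ d ∧
      Q.natDegree ≤ d - 1 ∧
      (∀ n : ℕ, P.coeff n ≠ 0 → n % 2 = d % 2) ∧
      (∀ n : ℕ, Q.coeff n ≠ 0 → n % 2 = (d - 1) % 2) ∧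
      (∀ x : ℝ, x ∈ Set.Icc (-1 : ℝ) 1 →
        ‖P.eval (x : ℂ)‖ ^ 2
          + (1 - x ^ 2) * ‖Q.eval (x : ℂ)‖ ^ 2 = 1) ∧
      (∀ x : ℝ, x ∈ Set.Icc (-1 : ℝ) 1 → qspU d Ψ x = qspMat P Q x) := by
  obtain ⟨hP, hXQ⟩ := parityDegLE_qspPolys d Ψ
  have hQ := hXQ.of_X_mul
  refine ⟨_, _, hP.natDegree_le, hQ.natDegree_le, fun n hn => (hP n hn).2,
    fun n hn => (hQ n hn).2, fun x hx => ?_, fun x hx => qspU_eq_qspMat d Ψ hx⟩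
  have hdet := det_qspMat (qspPolys d Ψ).1 (qspPolys d Ψ).2 hx
  rw [← qspU_eq_qspMat d Ψ hx, det_qspU d Ψ hx] at hdet
  exact_mod_cast hdet.symm

/-- QSP representation, existence direction: for every set of phase factors
`Ψ ∈ ℝ^{d+1}` with `d ≥ 1`, there exist complex polynomials `P, Q` with the stated degree,
parity and normalization conditions such that `U(x,Ψ)` has the QSP matrix form on `[-1,1]`. -/
theorem qsp_exists_polynomials (d : ℕ) (hd : 1 ≤ d) (Ψ : Fin (d + 1) → ℝ) :
    ∃ P Q : Polynomial ℂ,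
      P.natDegree ≤ d ∧
      Q.natDegree ≤ d - 1 ∧
      (∀ n : ℕ, P.coeff n ≠ 0 → n % 2 = d % 2) ∧
      (∀ n : ℕ, Q.coeff n ≠ 0 → n % 2 = (d - 1) % 2) ∧
      (∀ x : ℝ, x ∈ Set.Icc (-1 : ℝ) 1 →
        ‖P.eval (x : ℂ)‖ ^ 2
          + (1 - x ^ 2) * ‖Q.eval (x : ℂ)‖ ^ 2 = 1) ∧
      (∀ x : ℝ, x ∈ Set.Icc (-1 : ℝ) 1 → qspU d Ψ x = qspMat P Q x) :=
  qsp_exists_polynomials_general d Ψ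
end

section
/- Let d ≥ 1, Ψ = (ψ_0, …, ψ_d) ∈ ℝ^{d+1}, and x ∈ [−1,1]. Then Z · U(x,−Ψ) · Z equals the entrywise complex conjugate of U(x,Ψ). Moreover, defining Ψ̃ = (ψ̃_0, …, ψ̃_d) by ψ̃_0 = −ψ_0 + (−1)^d π/2, ψ̃_k = −ψ_k + (−1)^{d−k} π for 1 ≤ k ≤ d−1, and ψ̃_d = −ψ_d + π/2, one has U(x,Ψ̃) equals the entrywise complex conjugate of U(x,Ψ). -/
open Matrix Polynomial Complex

/-! Write `U(x, Ψ) = e^{iψ₀Z} ∏ⱼ W e^{iψⱼZ}` with `W = e^{iθX}`, `θ = arccos x`. Entrywise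
conjugation sends `e^{iψZ}` to `e^{-iψZ}` and `W` to `e^{-iθX} = Z W Z`; as `Z² = 1` and `Z`
commutes with every `e^{iψZ}`, the conjugate of `U(x, Ψ)` is `Z U(x, -Ψ) Z`.
For `Ψ̃`, `e^{±iπZ} = -1` and `e^{±iπZ/2} = ±iZ`: so `U(x, Ψ̃)` is `U(x, -Ψ)` with `±iZ` inserted
after its first and after its last phase and `d - 1` signs in between. These scalars multiply to
`1`, and moving the first `Z` past `e^{-iψ₀Z}` leaves `Z U(x, -Ψ) Z`. -/

theorem List.prod_map_conj_of_mul_self_eq_one {M α : Type*} [Monoid M] {z : M}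
    (hz : z * z = 1) (l : List α) (f : α → M) :
    (l.map fun a => z * f a * z).prod = z * (l.map f).prod * z := by
  induction l with
  | nil => simp [hz]
  | cons a l ih =>
    rw [List.map_cons, List.map_cons, List.prod_cons, List.prod_cons, ih]
    simp only [mul_assoc]
    rw [← mul_assoc z z, hz, one_mul]

namespace QSP

open Real

noncomputable def zRot (ψ : ℝ) : Matrix (Fin 2) (Fin 2) ℂ := NormedSpace.exp ((I * ψ) • PZ)

noncomputable def xRot (θ : ℝ) : Matrix (Fin 2) (Fin 2) ℂ := NormedSpace.exp ((I * θ) • PX)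

theorem qspU_eq (d : ℕ) (Ψ : Fin (d + 1) → ℝ) (x : ℝ) :
    qspU d Ψ x = zRot (Ψ 0) *
      ((List.finRange d).map fun j => xRot (arccos x) * zRot (Ψ j.succ)).prod :=
  rfl

theorem PZ_mul_self : PZ * PZ = 1 := by
  simp [PZ, Matrix.one_fin_two]

theorem PZ_eq_diagonal : PZ = diagonal ![1, -1] := by
  ext i j; fin_cases i <;> fin_cases j <;> simp [PZ]

theorem zRot_eq_diagonal (ψ : ℝ) : zRot ψ = diagonal ![cexp (ψ * I), cexp (-ψ * I)] := by
  rw [zRot, PZ_eq_diagonal, ← diagonal_smul, Matrix.exp_diagonal]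
  congr 1
  ext i; fin_cases i <;> simp [← Complex.exp_eq_exp_ℂ, mul_comm]

theorem zRot_add (a b : ℝ) : zRot (a + b) = zRot a * zRot b := by
  have hcomm : Commute ((I * a) • PZ) ((I * b) • PZ) :=
    ((Commute.refl PZ).smul_left _).smul_right _
  rw [zRot, zRot, zRot, ← Matrix.exp_add_of_commute _ _ hcomm, ← add_smul]
  push_cast; ring_nf

theorem commute_PZ_zRot (ψ : ℝ) : Commute PZ (zRot ψ) := by
  rw [PZ_eq_diagonal, zRot_eq_diagonal, Commute, SemiconjBy, diagonal_mul_diagonal,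
    diagonal_mul_diagonal]
  simp_rw [mul_comm]

theorem zRot_neg_one_pow_mul_pi (k : ℕ) : zRot ((-1) ^ k * π) = -1 := by
  rw [zRot_eq_diagonal]
  ext i j
  rcases k.even_or_odd with hk | hk <;> fin_cases i <;> fin_cases j <;> simp [hk.neg_one_pow]

theorem zRot_neg_one_pow_mul_pi_div_two (k : ℕ) :
    zRot ((-1) ^ k * (π / 2)) = ((-1) ^ k * I) • PZ := by
  rw [zRot_eq_diagonal, PZ_eq_diagonal, ← diagonal_smul]
  congr 1
  ext i
  fin_cases i <;> rcases k.even_or_odd with hk | hk <;> simp [hk.neg_one_pow, Complex.exp_neg]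

theorem zRot_pi_div_two : zRot (π / 2) = I • PZ := by
  simpa using zRot_neg_one_pow_mul_pi_div_two 0

theorem map_conj_exp {n : Type*} [Fintype n] [DecidableEq n] (A : Matrix n n ℂ) :
    (NormedSpace.exp A).map (starRingEnd ℂ) = NormedSpace.exp (A.map (starRingEnd ℂ)) := by
  have h (B : Matrix n n ℂ) : B.map (starRingEnd ℂ) = Bᵀᴴ := rfl
  rw [h, h, ← Matrix.exp_transpose, ← Matrix.exp_conjTranspose]

theorem map_conj_zRot (ψ : ℝ) : (zRot ψ).map (starRingEnd ℂ) = zRot (-ψ) := by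
  rw [zRot, zRot, map_conj_exp]
  congr 1
  ext i j; fin_cases i <;> fin_cases j <;> simp [PZ]

theorem map_conj_xRot (θ : ℝ) : (xRot θ).map (starRingEnd ℂ) = PZ * xRot θ * PZ := by
  have hPZ : PZ⁻¹ = PZ := Matrix.inv_eq_left_inv PZ_mul_self
  have hconj : ((I * θ) • PX).map (starRingEnd ℂ) = PZ * ((I * θ) • PX) * PZ⁻¹ := by
    rw [hPZ]; ext i j; fin_cases i <;> fin_cases j <;> simp [PX, PZ, Matrix.mul_apply]
  rw [xRot, map_conj_exp, hconj, Matrix.exp_conj _ _ (IsUnit.of_mul_eq_one _ PZ_mul_self), hPZ]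

theorem map_conj_qspU (d : ℕ) (Ψ : Fin (d + 1) → ℝ) (x : ℝ) :
    (qspU d Ψ x).map (starRingEnd ℂ) = PZ * qspU d (-Ψ) x * PZ := by
  have hfactor (ψ : ℝ) : (starRingEnd ℂ).mapMatrix (xRot (arccos x) * zRot ψ) =
      PZ * (xRot (arccos x) * zRot (-ψ)) * PZ := by
    rw [map_mul, RingHom.mapMatrix_apply, RingHom.mapMatrix_apply, map_conj_xRot, map_conj_zRot,
      mul_assoc, mul_assoc, (commute_PZ_zRot _).eq]
    simp only [mul_assoc]
  calc (qspU d Ψ x).map (starRingEnd ℂ)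
      = (starRingEnd ℂ).mapMatrix (qspU d Ψ x) := rfl
    _ = zRot (-Ψ 0) * ((List.finRange d).map fun j =>
          PZ * (xRot (arccos x) * zRot (-Ψ j.succ)) * PZ).prod := by
      rw [qspU_eq, map_mul, map_list_prod, List.map_map, RingHom.mapMatrix_apply, map_conj_zRot]
      simp only [Function.comp_def, hfactor]
    _ = PZ * qspU d (-Ψ) x * PZ := by
      rw [List.prod_map_conj_of_mul_self_eq_one PZ_mul_self, qspU_eq, ← mul_assoc, ← mul_assoc,
        ← (commute_PZ_zRot _).eq]
      simp only [mul_assoc, Pi.neg_apply]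

theorem qspU_succ (m : ℕ) (Φ : Fin (m + 2) → ℝ) (x : ℝ) :
    qspU (m + 1) Φ x = zRot (Φ 0) *
      ((List.finRange m).map fun j => xRot (arccos x) * zRot (Φ j.castSucc.succ)).prod *
      (xRot (arccos x) * zRot (Φ (Fin.last (m + 1)))) := by
  rw [qspU_eq, List.finRange_succ_last, List.map_append, List.prod_append, List.map_map,
    mul_assoc]
  simp [Function.comp_def]

theorem qspU_eq_conj_of_phase_shifts (m : ℕ) (Φ Φ' : Fin (m + 2) → ℝ) (x : ℝ)
    (h0 : Φ 0 = Φ' 0 + (-1) ^ (m + 1) * (π / 2))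
    (hmid : ∀ j : Fin m, ∃ k : ℕ, Φ j.castSucc.succ = Φ' j.castSucc.succ + (-1) ^ k * π)
    (hlast : Φ (Fin.last (m + 1)) = Φ' (Fin.last (m + 1)) + π / 2) :
    qspU (m + 1) Φ x = PZ * qspU (m + 1) Φ' x * PZ := by
  rw [qspU_succ, qspU_succ]
  set W := xRot (arccos x)
  set P := ((List.finRange m).map fun j => W * zRot (Φ' j.castSucc.succ)).prod
  have hflip (j : Fin m) :
      W * zRot (Φ j.castSucc.succ) = -(W * zRot (Φ' j.castSucc.succ)) := by
    obtain ⟨k, hk⟩ := hmid j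
    rw [hk, zRot_add, zRot_neg_one_pow_mul_pi, mul_neg_one, mul_neg]
  have hmiddle : ((List.finRange m).map fun j => W * zRot (Φ j.castSucc.succ)).prod =
      ((-1 : ℂ) ^ m) • P := by
    have hneg := List.prod_map_neg ((List.finRange m).map fun j => W * zRot (Φ' j.castSucc.succ))
    simp only [List.map_map, Function.comp_def, List.length_map, List.length_finRange] at hneg
    rw [List.map_congr_left (fun j _ => hflip j), hneg, ← neg_one_smul ℂ (1 : Matrix _ _ ℂ),
      _root_.smul_pow, one_pow, smul_one_mul]
  have hsign : I * ((-1) ^ m * ((-1) ^ (m + 1) * I)) = 1 := by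
    have hsq : ((-1 : ℂ) ^ m) ^ 2 = 1 := by rw [← pow_mul, mul_comm, pow_mul, neg_one_sq, one_pow]
    linear_combination hsq - ((-1 : ℂ) ^ m) ^ 2 * I_sq
  rw [hmiddle, h0, hlast, zRot_add, zRot_add, zRot_neg_one_pow_mul_pi_div_two, zRot_pi_div_two]
  simp only [smul_mul_assoc, mul_smul_comm, smul_smul]
  rw [hsign, one_smul, ← (commute_PZ_zRot _).eq]
  simp only [mul_assoc]

end QSP

theorem qsp_negate_phases_conj_general (d : ℕ) (hd : 1 ≤ d) (Ψ : Fin (d + 1) → ℝ) (x : ℝ) :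
    PZ * qspU d (-Ψ) x * PZ = (qspU d Ψ x).map (starRingEnd ℂ) ∧
    qspU d (fun k => if (k : ℕ) = 0 then -Ψ k + (-1 : ℝ) ^ d * (Real.pi / 2)
      else if (k : ℕ) = d then -Ψ k + Real.pi / 2
      else -Ψ k + (-1 : ℝ) ^ (d - (k : ℕ)) * Real.pi) x
      = (qspU d Ψ x).map (starRingEnd ℂ) := by
  obtain ⟨m, rfl⟩ := Nat.exists_eq_add_of_le' hd
  refine ⟨(QSP.map_conj_qspU _ Ψ x).symm, ?_⟩
  rw [QSP.map_conj_qspU]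
  apply QSP.qspU_eq_conj_of_phase_shifts
  · simp
  · intro j
    exact ⟨m - j, by simp [j.isLt.ne]⟩
  · simp

/-- `Z · U(x, -Ψ) · Z` equals the entrywise complex conjugate of `U(x, Ψ)`;
moreover the explicitly given modified phase factors `Ψ̃` also realize the entrywise complex
conjugate of `U(x, Ψ)`. -/
theorem qsp_negate_phases_conj (d : ℕ) (hd : 1 ≤ d) (Ψ : Fin (d + 1) → ℝ) (x : ℝ)
    (hx : x ∈ Set.Icc (-1 : ℝ) 1) :
    PZ * qspU d (-Ψ) x * PZ = (qspU d Ψ x).map (starRingEnd ℂ) ∧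
    qspU d (fun k => if (k : ℕ) = 0 then -Ψ k + (-1 : ℝ) ^ d * (Real.pi / 2)
      else if (k : ℕ) = d then -Ψ k + Real.pi / 2
      else -Ψ k + (-1 : ℝ) ^ (d - (k : ℕ)) * Real.pi) x
      = (qspU d Ψ x).map (starRingEnd ℂ) :=
  qsp_negate_phases_conj_general d hd Ψ x
end

section
/- Let G : ℕ → ℝ be a nonnegative function with G(1) ≤ 1 and G(2) ≤ 1, and suppose that for every integer L ≥ 3 there exists an integer k with 1 ≤ k ≤ L−1 such that G(L) ≤ (k/L) · G(k). Then for every integer L ≥ 2, G(L) ≤ 2/L. -/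
/-- if `G : ℕ → ℝ` is nonnegative, `G 1 ≤ 1`, `G 2 ≤ 1`, and for every
`L ≥ 3` there is `1 ≤ k ≤ L-1` with `G L ≤ (k/L) G k`, then `G L ≤ 2/L` for every `L ≥ 2`. -/
theorem success_probability_recurrence (G : ℕ → ℝ) (hG0 : ∀ n, 0 ≤ G n)
    (h1 : G 1 ≤ 1) (h2 : G 2 ≤ 1)
    (hrec : ∀ L : ℕ, 3 ≤ L → ∃ k : ℕ, 1 ≤ k ∧ k ≤ L - 1 ∧
      G L ≤ ((k : ℝ) / (L : ℝ)) * G k) :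
    ∀ L : ℕ, 2 ≤ L → G L ≤ 2 / (L : ℝ) := by
  intro L
  induction L using Nat.strong_induction_on with
  | _ L ih =>
    intro hL2
    rcases eq_or_lt_of_le hL2 with h | h
    · subst h; norm_num; linarith
    · have hL3 : 3 ≤ L := h
      obtain ⟨k, hk1, hkL, hrec'⟩ := hrec L hL3
      have hkL' : k < L := by omega
      have hLpos : (0:ℝ) < L := by positivity
      rcases eq_or_lt_of_le hk1 with hk | hk
      · -- k = 1
        subst hk
        push_cast at hrec'
        have h1L : G L ≤ 1 / (L:ℝ) := by
          have := mul_le_mul_of_nonneg_left h1 (by positivity : (0:ℝ) ≤ 1/L)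
          linarith
        have h2L : (1:ℝ) / L ≤ 2 / L := by gcongr; norm_num
        linarith
      · -- k ≥ 2
        have hk2 : 2 ≤ k := hk
        have hGk : G k ≤ 2 / k := ih k hkL' hk2
        have hkpos : (0:ℝ) < k := by positivity
        calc G L ≤ (k:ℝ)/L * G k := hrec'
        _ ≤ (k:ℝ)/L * (2/k) := by
            apply mul_le_mul_of_nonneg_left hGk (by positivity)
        _ = 2 / L := by field_simp
end
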